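/- Let k ≥ 1, let G be a finite connected simple graph that is (P3+kP2)-free and contains a vertex set A inducing P3+(k-1)P2, and assume that every minimum dominating set of G is a stable set. Let D be a minimum dominating set of G. If there exists a vertex v ∈ B ∩ D which has a private neighbour c ∈ N(v) ∩ C with respect to D and a private neighbour b ∈ N(v) with respect to D such that c is not adjacent to b, then |B ∩ D| ≤ (k+1)·|A|. -/

import Mathlib

open SimpleGraph

/-- The disjoint union of a path `P₃` and `k` copies of `P₂`. -/
def P3kP2 (k : ℕ) : SimpleGraph (Fin 3 ⊕ Fin k × Fin 2) :=
  SimpleGraph.fromRel fun x y =>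
    match x, y with
    | Sum.inl a, Sum.inl b => (b : ℕ) = (a : ℕ) + 1
    | Sum.inr a, Sum.inr b => a.1 = b.1 ∧ a.2 ≠ b.2
    | _, _ => False

/-- `G` contains no induced subgraph isomorphic to `H`. -/
def HFree {V W : Type*} (G : SimpleGraph V) (H : SimpleGraph W) : Prop :=
  IsEmpty (H ↪g G)

/-- `D` is a dominating set of `G`. -/
def IsDomSet {V : Type*} (G : SimpleGraph V) (D : Set V) : Prop :=
  ∀ v ∉ D, ∃ u ∈ D, G.Adj u v

/-- `D` is a minimum dominating set of `G`. -/
def IsMinDomSet {V : Type*} (G : SimpleGraph V) (D : Set V) : Prop :=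
  IsDomSet G D ∧ ∀ D' : Set V, IsDomSet G D' → D.ncard ≤ D'.ncard

/-- The distance from a vertex `v` to a set `A` of vertices. -/
noncomputable def distToSet {V : Type*} (G : SimpleGraph V) (v : V) (A : Set V) : ℕ :=
  sInf ((G.dist v) '' A)

/-- The set of vertices at distance two from `A` whose open neighbourhood is a clique. -/
def cliqueDistTwo {V : Type*} (G : SimpleGraph V) (A : Set V) : Set V :=
  {v | distToSet G v A = 2 ∧ G.IsClique (G.neighborSet v)}

/-- A vertex `c₁` is regular (w.r.t. `A` and `k`) if `c₁ ∈ 𝒞` and there are `k` further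
vertices of `𝒞` such that all `k+1` of them are pairwise at distance at least four. -/
def IsRegularVertex {V : Type*} (G : SimpleGraph V) (k : ℕ) (A : Set V) (c₁ : V) : Prop :=
  c₁ ∈ cliqueDistTwo G A ∧ ∃ c : Fin k → V, (∀ i, c i ∈ cliqueDistTwo G A) ∧
    (∀ i, 4 ≤ G.dist c₁ (c i)) ∧ ∀ i j, i ≠ j → 4 ≤ G.dist (c i) (c j)

/-- `v` is a private neighbour of `u` with respect to the dominating set `D`:
`N[v] ∩ D = {u}`. -/
def IsPrivateNbr {V : Type*} (G : SimpleGraph V) (D : Set V) (u v : V) : Prop :=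
  (insert v (G.neighborSet v)) ∩ D = {u}

/-- A stable (independent) set of vertices. -/
def IsStable {V : Type*} (G : SimpleGraph V) (S : Set V) : Prop :=
  S.Pairwise fun u v => ¬ G.Adj u v

/-! An edge between two vertices at distance at least two from `A` would extend the induced
`P₃ + (k-1)P₂` on `A` to an induced `P₃ + kP₂`; so the vertices at distance two from `A` form a
stable set and, `G` being connected, no vertex is farther away. Let `S ⊆ D - v` be an irredundant
set dominating the vertices of `C` outside `D ∪ N(v) ∪ N(b)`. Each `s ∈ S` has a private neighbour
there, and these private edges together with the induced path `b v c` form an induced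
`P₃ + |S|P₂`, whence `|S| ≤ k - 1`. Now `A ∪ {v, b} ∪ S ∪ (D - B)` dominates `G`, and the
minimality of `D` gives `|B ∩ D| ≤ |A| + k + 1 ≤ (k + 1)|A|`. -/

section

variable {V : Type*} {G : SimpleGraph V}

@[simp] lemma P3kP2_adj_inl_inl {n : ℕ} (a b : Fin 3) :
    (P3kP2 n).Adj (.inl a) (.inl b) ↔ (b : ℕ) = a + 1 ∨ (a : ℕ) = b + 1 := by
  simp only [P3kP2, fromRel_adj, ne_eq, Sum.inl.injEq, and_iff_right_iff_imp]
  omega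

@[simp] lemma P3kP2_adj_inl_inr {n : ℕ} (a : Fin 3) (q : Fin n × Fin 2) :
    ¬ (P3kP2 n).Adj (.inl a) (.inr q) := by
  simp [P3kP2]

@[simp] lemma P3kP2_adj_inr_inl {n : ℕ} (a : Fin 3) (q : Fin n × Fin 2) :
    ¬ (P3kP2 n).Adj (.inr q) (.inl a) := by
  simp [P3kP2]

@[simp] lemma P3kP2_adj_inr_inr {n : ℕ} (p q : Fin n × Fin 2) :
    (P3kP2 n).Adj (.inr p) (.inr q) ↔ p.1 = q.1 ∧ p.2 ≠ q.2 := by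
  simp only [P3kP2, fromRel_adj, ne_eq, Sum.inr.injEq]
  grind

structure IsInducedP3 (G : SimpleGraph V) (x : Fin 3 → V) : Prop where
  adj_01 : G.Adj (x 0) (x 1)
  adj_12 : G.Adj (x 1) (x 2)
  not_adj_02 : ¬ G.Adj (x 0) (x 2)
  ne_02 : x 0 ≠ x 2

/-- The path `x` and the edges `e i 0 — e i 1` induce a copy of `P3kP2 n` in `G`. -/
structure SpansP3kP2 (G : SimpleGraph V) {n : ℕ} (x : Fin 3 → V) (e : Fin n → Fin 2 → V) :
    Prop where
  path : IsInducedP3 G x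
  adj_pair : ∀ i, G.Adj (e i 0) (e i 1)
  not_adj_pairs : ∀ i j, i ≠ j → ∀ s t, ¬ G.Adj (e i s) (e j t)
  not_adj_path_pair : ∀ a i s, ¬ G.Adj (x a) (e i s)

namespace SpansP3kP2

variable {n : ℕ} {x : Fin 3 → V} {e : Fin n → Fin 2 → V}

lemma adj_pair_iff (h : SpansP3kP2 G x e) (i : Fin n) (s t : Fin 2) :
    G.Adj (e i s) (e i t) ↔ s ≠ t := by
  have := h.adj_pair i
  fin_cases s <;> fin_cases t <;> simp [this, this.symm]

lemma exists_adj_pair (h : SpansP3kP2 G x e) (i : Fin n) (s : Fin 2) :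
    ∃ t, G.Adj (e i s) (e i t) := by
  fin_cases s
  exacts [⟨1, h.adj_pair i⟩, ⟨0, (h.adj_pair i).symm⟩]

lemma nonempty_embedding (h : SpansP3kP2 G x e) : Nonempty (P3kP2 n ↪g G) := by
  have hP := h.path
  have h20 : ¬ G.Adj (x 2) (x 0) := fun h' => hP.not_adj_02 h'.symm
  let φ := Sum.elim x fun q : Fin n × Fin 2 => e q.1 q.2
  have hφ : ∀ p q, G.Adj (φ p) (φ q) ↔ (P3kP2 n).Adj p q := by
    rintro (a | ⟨i, s⟩) (b | ⟨j, t⟩)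
    · fin_cases a <;> fin_cases b <;>
        simp [φ, hP.adj_01, hP.adj_12, hP.not_adj_02, hP.adj_01.symm, hP.adj_12.symm, h20]
    · simpa [φ] using h.not_adj_path_pair a j t
    · simpa [φ] using fun h' => h.not_adj_path_pair b i s h'.symm
    · by_cases hij : i = j
      · subst hij
        simp [φ, h.adj_pair_iff]
      · simp [φ, hij, h.not_adj_pairs i j hij]
  -- A vertex of a pair sees its partner, which no other vertex of the copy sees.
  have hφinj : Function.Injective φ := by
    rintro (a | ⟨i, s⟩) (b | ⟨j, t⟩) hab <;> simp only [φ, Sum.elim_inl, Sum.elim_inr] at hab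
    · fin_cases a <;> fin_cases b <;>
        first
          | rfl
          | exact absurd hab hP.adj_01.ne | exact absurd hab hP.adj_01.ne'
          | exact absurd hab hP.adj_12.ne | exact absurd hab hP.adj_12.ne'
          | exact absurd hab hP.ne_02 | exact absurd hab.symm hP.ne_02
    · obtain ⟨t', ht'⟩ := h.exists_adj_pair j t
      exact (h.not_adj_path_pair a j t' (hab ▸ ht')).elim
    · obtain ⟨s', hs'⟩ := h.exists_adj_pair i s
      exact (h.not_adj_path_pair b i s' (hab ▸ hs')).elim
    · obtain ⟨s', hs'⟩ := h.exists_adj_pair i s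
      by_cases hij : i = j
      · subst hij
        by_contra hst
        exact G.irrefl (hab ▸ (h.adj_pair_iff i s t).mpr fun h' => hst (by rw [h']))
      · exact (h.not_adj_pairs j i (Ne.symm hij) t s' (hab ▸ hs')).elim
  exact ⟨⟨⟨φ, hφinj⟩, hφ _ _⟩⟩

lemma snoc (h : SpansP3kP2 G x e) {p : Fin 2 → V} (hp : G.Adj (p 0) (p 1))
    (hxp : ∀ a s, ¬ G.Adj (x a) (p s)) (hep : ∀ i s t, ¬ G.Adj (e i s) (p t)) :
    SpansP3kP2 G x (Fin.snoc e p : Fin (n + 1) → Fin 2 → V) where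
  path := h.path
  adj_pair i := by cases i using Fin.lastCases <;> simp [hp, h.adj_pair]
  not_adj_pairs i j hij s t := by
    cases i using Fin.lastCases <;> cases j using Fin.lastCases
    · exact absurd rfl hij
    · simpa using fun h' => hep _ t s h'.symm
    · simpa using hep _ s t
    · simpa using h.not_adj_pairs _ _ (fun h' => hij (by rw [h'])) s t
  not_adj_path_pair a i s := by
    cases i using Fin.lastCases <;> simp [hxp, h.not_adj_path_pair]

end SpansP3kP2

lemma SimpleGraph.Embedding.spansP3kP2 {n : ℕ} (f : P3kP2 n ↪g G) :
    SpansP3kP2 G (fun a => f (.inl a)) (fun i s => f (.inr (i, s))) where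
  path := ⟨by simp, by simp, by simp, by simp⟩
  adj_pair i := by simp
  not_adj_pairs i j hij s t := by simp [hij]
  not_adj_path_pair a i s := by simp

section distToSet

variable {A : Set V} {v w a : V}

lemma distToSet_le_dist (ha : a ∈ A) : distToSet G v A ≤ G.dist v a :=
  Nat.sInf_le ⟨a, ha, rfl⟩

lemma exists_dist_eq_distToSet (hA : A.Nonempty) (v : V) :
    ∃ a ∈ A, G.dist v a = distToSet G v A :=
  Nat.sInf_mem (hA.image _)

lemma distToSet_eq_zero_of_mem (hv : v ∈ A) : distToSet G v A = 0 := by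
  simpa using distToSet_le_dist (G := G) (v := v) hv

lemma distToSet_le_one_of_adj (ha : a ∈ A) (h : G.Adj v a) : distToSet G v A ≤ 1 :=
  (distToSet_le_dist ha).trans (dist_eq_one_iff_adj.mpr h).le

lemma exists_adj_of_distToSet_eq_one (hA : A.Nonempty) (h : distToSet G v A = 1) :
    ∃ a ∈ A, G.Adj a v := by
  obtain ⟨a, ha, hva⟩ := exists_dist_eq_distToSet hA v
  exact ⟨a, ha, (dist_eq_one_iff_adj.mp (hva.trans h)).symm⟩

lemma SimpleGraph.Connected.mem_of_distToSet_eq_zero (hG : G.Connected) (hA : A.Nonempty)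
    (h : distToSet G v A = 0) : v ∈ A := by
  obtain ⟨a, ha, hva⟩ := exists_dist_eq_distToSet hA v
  rwa [hG.dist_eq_zero_iff.mp (hva.trans h)]

lemma SimpleGraph.Connected.distToSet_le_succ_of_adj (hG : G.Connected) (hA : A.Nonempty)
    (h : G.Adj v w) : distToSet G v A ≤ distToSet G w A + 1 := by
  obtain ⟨a, ha, hwa⟩ := exists_dist_eq_distToSet hA w
  calc distToSet G v A ≤ G.dist v a := distToSet_le_dist ha
    _ ≤ G.dist v w + G.dist w a := hG.dist_triangle
    _ = distToSet G w A + 1 := by rw [dist_eq_one_iff_adj.mpr h, hwa, add_comm]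

end distToSet

lemma not_adj_of_two_le_distToSet {m : ℕ} (hfree : HFree G (P3kP2 (m + 1)))
    (f : P3kP2 m ↪g G) {y z : V} (hy : 2 ≤ distToSet G y (Set.range f))
    (hz : 2 ≤ distToSet G z (Set.range f)) : ¬ G.Adj y z := by
  intro hyz
  have far : ∀ w, 2 ≤ distToSet G w (Set.range f) → ∀ q, ¬ G.Adj (f q) w := fun w hw q hq => by
    have := distToSet_le_one_of_adj (Set.mem_range_self q) hq.symm
    omega
  have far' : ∀ q s, ¬ G.Adj (f q) (![y, z] s) := by
    intro q s
    fin_cases s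
    exacts [far y hy q, far z hz q]
  have hspan := f.spansP3kP2.snoc (p := ![y, z]) hyz (fun a => far' _) (fun i s => far' _)
  exact hfree.false hspan.nonempty_embedding.some

lemma distToSet_le_two {m : ℕ} (hfree : HFree G (P3kP2 (m + 1))) (f : P3kP2 m ↪g G)
    (hG : G.Connected) (v : V) : distToSet G v (Set.range f) ≤ 2 := by
  by_contra! hv
  have hvA : v ≠ f (.inl 0) := fun h => by
    rw [distToSet_eq_zero_of_mem (h ▸ Set.mem_range_self _)] at hv
    omega
  have : Nontrivial V := nontrivial_of_ne _ _ hvA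
  obtain ⟨w, hvw⟩ := hG.preconnected.exists_adj_of_nontrivial v
  have := hG.distToSet_le_succ_of_adj (Set.range_nonempty f) hvw
  exact not_adj_of_two_le_distToSet hfree f (by omega) (by omega) hvw

lemma IsStable.not_adj {S : Set V} (hS : IsStable G S) {y z : V} (hy : y ∈ S) (hz : z ∈ S) :
    ¬ G.Adj y z :=
  fun h => hS hy hz h.ne h

lemma IsPrivateNbr.eq_of_adj {D : Set V} {u w y : V} (h : IsPrivateNbr G D u w) (hy : y ∈ D)
    (hwy : G.Adj w y) : y = u := by
  have : y ∈ insert w (G.neighborSet w) ∩ D := ⟨Set.mem_insert_of_mem _ hwy, hy⟩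
  rwa [h] at this

lemma exists_subset_forall_privateNbr [Finite V] {T X : Set V}
    (hT : ∀ z ∈ X, ∃ s ∈ T, G.Adj s z) :
    ∃ S ⊆ T, (∀ z ∈ X, ∃ s ∈ S, G.Adj s z) ∧
      ∀ s ∈ S, ∃ z ∈ X, G.Adj s z ∧ ∀ s' ∈ S, G.Adj s' z → s' = s := by
  obtain ⟨S, -, hS⟩ := (Set.toFinite {S | S ⊆ T ∧ ∀ z ∈ X, ∃ s ∈ S, G.Adj s z}).exists_le_minimal
    ⟨subset_rfl, hT⟩
  refine ⟨S, hS.prop.1, hS.prop.2, fun s hs => ?_⟩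
  by_contra! hs'
  have hcover : S \ {s} ∈ {S | S ⊆ T ∧ ∀ z ∈ X, ∃ s ∈ S, G.Adj s z} := by
    refine ⟨Set.sdiff_subset.trans hS.prop.1, fun z hz => ?_⟩
    obtain ⟨r, hr, hrz⟩ := hS.prop.2 z hz
    by_cases hrs : r = s
    · obtain ⟨r', hr', hr'z, hr's⟩ := hs' z hz (hrs ▸ hrz)
      exact ⟨r', ⟨hr', hr's⟩, hr'z⟩
    · exact ⟨r, ⟨hr, hrs⟩, hrz⟩
  have hSs := hS.eq_of_le hcover Set.sdiff_subset
  rw [← hSs] at hs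
  exact hs.2 rfl

/-- The edges from each `s ∈ S` to a private neighbour, together with the path `x`,
induce `P₃ + |S| P₂`. -/
lemma ncard_lt_of_forall_privateNbr [Finite V] {n : ℕ} (hfree : HFree G (P3kP2 n))
    {x : Fin 3 → V} (hx : IsInducedP3 G x) {S X : Set V} (hS : IsStable G S) (hX : IsStable G X)
    (hpriv : ∀ s ∈ S, ∃ z ∈ X, G.Adj s z ∧ ∀ s' ∈ S, G.Adj s' z → s' = s)
    (hxS : ∀ a, ∀ w ∈ S, ¬ G.Adj (x a) w) (hxX : ∀ a, ∀ w ∈ X, ¬ G.Adj (x a) w) :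
    S.ncard < n := by
  by_contra! hn
  choose! p hpX hpadj hpuniq using hpriv
  obtain ⟨T, hTS, hTn⟩ := Set.exists_subset_card_eq hn
  let g : Fin n → V := fun i => ((Finite.equivFinOfCardEq hTn).symm i : V)
  have hgS : ∀ i, g i ∈ S := fun i => hTS (Subtype.coe_prop _)
  have hginj : Function.Injective g :=
    Subtype.val_injective.comp (Finite.equivFinOfCardEq hTn).symm.injective
  have hpair : ∀ i s, ![g i, p (g i)] s ∈ S ∨ ![g i, p (g i)] s ∈ X := by
    intro i s
    fin_cases s
    exacts [.inl (hgS i), .inr (hpX _ (hgS i))]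
  refine hfree.false (SpansP3kP2.nonempty_embedding (x := x) (e := fun i => ![g i, p (g i)])
    ⟨hx, fun i => hpadj _ (hgS i), fun i j hij s t => ?_, fun a i s => ?_⟩).some
  · have hpriv' : ∀ i j, i ≠ j → ¬ G.Adj (g i) (p (g j)) := fun i j hij h =>
      hij (hginj (hpuniq _ (hgS j) _ (hgS i) h))
    fin_cases s <;> fin_cases t
    · exact hS.not_adj (hgS i) (hgS j)
    · exact hpriv' i j hij
    · exact fun h => hpriv' j i (Ne.symm hij) h.symm
    · exact hX.not_adj (hpX _ (hgS i)) (hpX _ (hgS j))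
  · rcases hpair i s with h | h
    exacts [hxS a _ h, hxX a _ h]

lemma isDomSet_union_sdiff (hG : G.Connected) {A R D : Set V} (hA : A.Nonempty)
    (hle : ∀ z, distToSet G z A ≤ 2)
    (hR : ∀ z, distToSet G z A = 2 → z ∉ D → ∃ r ∈ R, G.Adj r z) :
    IsDomSet G (A ∪ R ∪ (D \ {z | distToSet G z A = 1})) := by
  intro z hz
  simp only [Set.mem_union, Set.mem_sdiff, Set.mem_ofPred_eq, not_or, not_and, not_not] at hz
  obtain ⟨⟨hzA, -⟩, hzD⟩ := hz
  have h0 : distToSet G z A ≠ 0 := fun h => hzA (hG.mem_of_distToSet_eq_zero hA h)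
  obtain h1 | h2 : distToSet G z A = 1 ∨ distToSet G z A = 2 := by have := hle z; omega
  · obtain ⟨a, ha, haz⟩ := exists_adj_of_distToSet_eq_one hA h1
    exact ⟨a, .inl (.inl ha), haz⟩
  · obtain ⟨r, hr, hrz⟩ := hR z h2 fun hz => by have := hzD hz; omega
    exact ⟨r, .inl (.inr hr), hrz⟩

lemma ncard_inter_le_of_isDomSet_union_sdiff [Finite V] {B D R : Set V} (hD : IsMinDomSet G D)
    (hR : IsDomSet G (R ∪ (D \ B))) : (B ∩ D).ncard ≤ R.ncard := by
  have := hD.2 _ hR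
  have := Set.ncard_union_le R (D \ B)
  have := Set.ncard_inter_add_ncard_sdiff_eq_ncard D B
  rw [Set.inter_comm]
  omega

lemma exists_ncard_le_dominating_distToSet_eq_two [Finite V] {m : ℕ}
    (hfree : HFree G (P3kP2 (m + 1))) (f : P3kP2 m ↪g G) {D : Set V} (hDdom : IsDomSet G D)
    (hDst : IsStable G D) {v b c : V}
    (hvD : v ∈ D) (hvb : G.Adj v b) (hvc : G.Adj v c) (hc : distToSet G c (Set.range f) = 2)
    (hpb : IsPrivateNbr G D v b) (hpc : IsPrivateNbr G D v c) (hbc : b ≠ c)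
    (hnadj : ¬ G.Adj b c) :
    ∃ S : Set V, S.ncard ≤ m ∧ ∀ z, distToSet G z (Set.range f) = 2 → z ∉ D →
      ∃ r ∈ insert v (insert b S), G.Adj r z := by
  set X := {z | distToSet G z (Set.range f) = 2 ∧ z ∉ D ∧ ¬ G.Adj v z ∧ ¬ G.Adj b z}
  obtain ⟨S, hSD, hSX, hSpriv⟩ := exists_subset_forall_privateNbr (T := D \ {v}) (X := X)
    fun z hz => by
      obtain ⟨u, hu, huz⟩ := hDdom z hz.2.1
      exact ⟨u, ⟨hu, fun huv => hz.2.2.1 (huv ▸ huz)⟩, huz⟩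
  have hSD' : S ⊆ D := hSD.trans Set.sdiff_subset
  have hXst : IsStable G X := fun y hy z hz _ =>
    not_adj_of_two_le_distToSet hfree f hy.1.ge hz.1.ge
  have hxS : ∀ a, ∀ w ∈ S, ¬ G.Adj (![b, v, c] a) w := by
    intro a w hw
    obtain ⟨hwD, hwv⟩ := hSD hw
    fin_cases a
    · exact fun h => hwv (hpb.eq_of_adj hwD h)
    · exact hDst.not_adj hvD hwD
    · exact fun h => hwv (hpc.eq_of_adj hwD h)
  have hxX : ∀ a, ∀ w ∈ X, ¬ G.Adj (![b, v, c] a) w := by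
    intro a w hw
    fin_cases a
    exacts [hw.2.2.2, hw.2.2.1, not_adj_of_two_le_distToSet hfree f hc.ge hw.1.ge]
  have hSm := ncard_lt_of_forall_privateNbr hfree ⟨hvb.symm, hvc, hnadj, hbc⟩
    (Set.Pairwise.mono hSD' hDst) hXst hSpriv hxS hxX
  refine ⟨S, Nat.lt_succ_iff.mp hSm, fun z h2 hzD => ?_⟩
  by_cases hvz : G.Adj v z
  · exact ⟨v, Set.mem_insert _ _, hvz⟩
  by_cases hbz : G.Adj b z
  · exact ⟨b, Set.mem_insert_of_mem _ (Set.mem_insert _ _), hbz⟩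
  obtain ⟨s, hs, hsz⟩ := hSX z ⟨h2, hzD, hvz, hbz⟩
  exact ⟨s, Set.mem_insert_of_mem _ (Set.mem_insert_of_mem _ hs), hsz⟩

end

theorem stmt10
    {V : Type*} [Fintype V] (k : ℕ) (hk : 1 ≤ k) (G : SimpleGraph V)
    (hconn : G.Connected) (hfree : HFree G (P3kP2 k))
    (A : Set V) (hA : ∃ f : P3kP2 (k-1) ↪g G, Set.range f = A)
    (B C : Set V) (hB : B = {v | distToSet G v A = 1})
    (hC : C = {v | distToSet G v A = 2})
    (hstable : ∀ D : Set V, IsMinDomSet G D → IsStable G D)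
    (D : Set V) (hD : IsMinDomSet G D)
    (v : V) (hv : v ∈ B ∩ D) (c b : V) (hcv : c ∈ G.neighborSet v ∩ C)
    (hbv : b ∈ G.neighborSet v) (hpc : IsPrivateNbr G D v c) (hpb : IsPrivateNbr G D v b)
    (hne : c ≠ b) (hnadj : ¬ G.Adj c b) :
    (B ∩ D).ncard ≤ (k + 1) * A.ncard := by
  obtain ⟨m, rfl⟩ : ∃ m, k = m + 1 := ⟨k - 1, by omega⟩
  obtain ⟨f, rfl⟩ : ∃ f : P3kP2 m ↪g G, Set.range f = A := hA
  subst hB hC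
  obtain ⟨S, hSm, hS⟩ := exists_ncard_le_dominating_distToSet_eq_two hfree f hD.1
    (hstable D hD) hv.2 hbv hcv.1 hcv.2 hpb hpc hne.symm fun h => hnadj h.symm
  have hdom := isDomSet_union_sdiff hconn (Set.range_nonempty f)
    (distToSet_le_two hfree f hconn) hS
  have hA : 2 ≤ (Set.range f).ncard := by
    simp only [Set.ncard_range_of_injective f.injective, Nat.card_eq_fintype_card,
      Fintype.card_sum, Fintype.card_prod, Fintype.card_fin]
    omega
  calc _ ≤ (Set.range f ∪ insert v (insert b S)).ncard :=
        ncard_inter_le_of_isDomSet_union_sdiff hD hdom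
    _ ≤ (Set.range f).ncard + (S.ncard + 1 + 1) :=
        (Set.ncard_union_le _ _).trans (by grw [Set.ncard_insert_le, Set.ncard_insert_le])
    _ ≤ (m + 1 + 1) * (Set.range f).ncard := by nlinarith
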